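/- arXiv:1507.05752 — 3 statements merged into one kernel-verified Lean document; each statement's English description precedes it below -/
import Mathlib

section
/- For all natural numbers t ≥ 1 and m ≥ 1, there exist a natural number d with d = t·⌈t/ln 2⌉·⌈log₂(4m)⌉ and finite sets S₁, …, S_m ⊆ {0, 1, …, d−1} such that |Sᵢ| = t for every i, and for every i, ∑_{j < i} 2^{|Sᵢ ∩ Sⱼ|} ≤ m − 1. -/
open Finset

/-!
Identify `Fin d` with `Fin K × Fin t × Fin a`, where `a = ⌈t / ln 2⌉` and `K = ⌈log₂ (4m)⌉`, and
take as sets graphs of functions `Fin t → Fin a`, each placed in one of the `K` blocks. Two graphs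
in the same block meet in as many points as the functions agree; for a fixed `g`, the average of
`2 ^ #{x | f x = g x}` over all `f` is `(1 + 1/a) ^ t ≤ e ^ (t/a) ≤ 2`, so functions can be chosen
greedily with `∑_{j<p} 2 ^ #{x | f_p x = f_j x} ≤ 2p`. Graphs in different blocks are disjoint
and contribute `1` each. Putting index `i` in block `⌊log₂ (m - i)⌋`, an index at position `p`
of a block starting at `s` gets the bound `s + 2p ≤ m - 1`.
-/

theorem exists_seq_of_forall_exists {X : Type*} {Q : (n : ℕ) → (Fin n → X) → X → Prop}
    (h : ∀ n prev, ∃ x, Q n prev x) : ∃ f : ℕ → X, ∀ n, Q n (fun j => f j) (f n) := by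
  choose g hg using h
  refine ⟨Nat.strongRec fun n prev => g n fun j => prev j j.2, fun n => ?_⟩
  beta_reduce
  rw [Nat.strongRec_eq]
  exact hg n _

section Agreement

variable {α β : Type*} [Fintype α] [Fintype β] [DecidableEq β]

theorem sum_two_pow_card_agree_eq [DecidableEq α] (g : α → β) :
    ∑ f : α → β, 2 ^ #{x | f x = g x} = (Fintype.card β + 1) ^ Fintype.card α := by
  have hprod : ∀ f : α → β, 2 ^ #{x | f x = g x} = ∏ x, if f x = g x then 2 else 1 := by
    intro f
    rw [prod_ite, prod_const, prod_const_one, mul_one]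
  have hsum : ∀ x, ∑ v, (if v = g x then 2 else 1) = Fintype.card β + 1 := by
    intro x
    simp_rw [show ∀ v, (if v = g x then 2 else 1) = 1 + if v = g x then 1 else 0 from
      fun v => by split <;> rfl]
    simp [sum_add_distrib]
  simp_rw [hprod, ← Fintype.prod_sum (fun x v => if v = g x then 2 else 1), hsum, prod_const,
    card_univ]

theorem exists_sum_two_pow_card_agree_mul_le [Nonempty (α → β)] {ι : Type*} (s : Finset ι)
    (g : ι → α → β) :
    ∃ f : α → β, (∑ j ∈ s, 2 ^ #{x | f x = g j x}) * Fintype.card β ^ Fintype.card α ≤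
      #s * (Fintype.card β + 1) ^ Fintype.card α := by
  classical
  obtain ⟨f, -, hf⟩ := exists_le_of_sum_le (s := univ) univ_nonempty
    (f := fun f : α → β => (∑ j ∈ s, 2 ^ #{x | f x = g j x}) * Fintype.card β ^ Fintype.card α)
    (g := fun _ => #s * (Fintype.card β + 1) ^ Fintype.card α) (le_of_eq (by
      rw [← sum_mul, sum_comm]
      simp only [sum_two_pow_card_agree_eq, sum_const, card_univ, Fintype.card_fun, smul_eq_mul]
      ring))
  exact ⟨f, hf⟩

theorem add_one_pow_le_two_mul_pow {b t : ℕ} (h : (t : ℝ) ≤ b * Real.log 2) :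
    (b + 1) ^ t ≤ 2 * b ^ t := by
  rcases b.eq_zero_or_pos with rfl | hb
  · obtain rfl : t = 0 := by exact_mod_cast (by simpa using h : (t : ℝ) ≤ 0).antisymm t.cast_nonneg
    simp
  have hb' : (0 : ℝ) < b := by exact_mod_cast hb
  suffices ((b : ℝ) + 1) ^ t ≤ 2 * (b : ℝ) ^ t by exact_mod_cast this
  calc ((b : ℝ) + 1) ^ t = b ^ t * (1 + 1 / b) ^ t := by rw [← mul_pow]; field_simp
    _ ≤ b ^ t * Real.exp (1 / b) ^ t := by
        gcongr
        linarith [Real.add_one_le_exp (1 / b)]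
    _ = b ^ t * Real.exp (t / b) := by rw [← Real.exp_nat_mul, mul_one_div]
    _ ≤ b ^ t * 2 := by
        gcongr
        rw [← Real.exp_log two_pos, Real.exp_le_exp, div_le_iff₀ hb', mul_comm]
        exact h
    _ = 2 * b ^ t := mul_comm _ _

theorem exists_seq_sum_two_pow_card_agree_le [Nonempty (α → β)]
    (h : (Fintype.card α : ℝ) ≤ Fintype.card β * Real.log 2) :
    ∃ f : ℕ → α → β, ∀ i, ∑ j ∈ range i, 2 ^ #{x | f i x = f j x} ≤ 2 * i := by
  classical
  obtain ⟨f, hf⟩ := exists_seq_of_forall_exists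
    (Q := fun n (prev : Fin n → α → β) x => ∑ j, 2 ^ #{y | x y = prev j y} ≤ 2 * n)
    fun n prev => by
      obtain ⟨x, hx⟩ := exists_sum_two_pow_card_agree_mul_le univ prev
      have hpos : 0 < Fintype.card β ^ Fintype.card α := by
        simpa using Fintype.card_pos (α := α → β)
      refine ⟨x, Nat.le_of_mul_le_mul_right ?_ hpos⟩
      calc _ ≤ n * (Fintype.card β + 1) ^ Fintype.card α := by simpa using hx
        _ ≤ n * (2 * Fintype.card β ^ Fintype.card α) := by
          gcongr; exact add_one_pow_le_two_mul_pow h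
        _ = 2 * n * Fintype.card β ^ Fintype.card α := by ring
  refine ⟨f, fun i => ?_⟩
  simpa [Fin.sum_univ_eq_sum_range fun j => 2 ^ #{x | f i x = f j x}] using hf i

end Agreement

section TaggedGraph

variable {α β γ : Type*} [Fintype α] [DecidableEq α] [DecidableEq β] [DecidableEq γ]

def taggedGraph (c : γ) (g : α → β) : Finset (γ × α × β) :=
  univ.image fun x => (c, x, g x)

theorem card_taggedGraph (c : γ) (g : α → β) : #(taggedGraph c g) = Fintype.card α :=
  card_image_of_injective _ fun _ _ hxy => congrArg (fun p => p.2.1) hxy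

theorem disjoint_taggedGraph {c c' : γ} (h : c ≠ c') (g g' : α → β) :
    Disjoint (taggedGraph c g) (taggedGraph c' g') := by
  simp only [taggedGraph, disjoint_left, mem_image, mem_univ, true_and]
  rintro _ ⟨x, rfl⟩ ⟨y, hy⟩
  exact h (congrArg Prod.fst hy).symm

theorem card_taggedGraph_inter (c : γ) (g g' : α → β) :
    #(taggedGraph c g ∩ taggedGraph c g') = #{x | g x = g' x} := by
  have : taggedGraph c g ∩ taggedGraph c g' =
      ({x | g x = g' x} : Finset α).image fun x => (c, x, g x) := by
    ext ⟨d, x, y⟩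
    simp only [taggedGraph, mem_inter, mem_image, mem_univ, true_and, mem_filter, Prod.mk.injEq]
    aesop
  rw [this, card_image_of_injective _ fun _ _ hxy => congrArg (fun p => p.2.1) hxy]

theorem sum_two_pow_card_inter_taggedGraph_le (f : ℕ → α → β)
    (hf : ∀ p, ∑ q ∈ range p, 2 ^ #{x | f p x = f q x} ≤ 2 * p)
    (blk : ℕ → γ) (pos : ℕ → ℕ) (i : ℕ)
    (hpos : ∀ j < i, blk j = blk i → j + pos i = i + pos j) :
    ∑ j ∈ range i, 2 ^ #(taggedGraph (blk i) (f (pos i)) ∩ taggedGraph (blk j) (f (pos j))) ≤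
      #{j ∈ range i | blk j ≠ blk i} + 2 * pos i := by
  rw [← sum_filter_not_add_sum_filter _ (fun j => blk j = blk i)]
  gcongr
  · rw [card_eq_sum_ones]
    refine (sum_congr rfl fun j hj => ?_).le
    rw [disjoint_iff_inter_eq_empty.1 (disjoint_taggedGraph (Ne.symm (mem_filter.1 hj).2) _ _),
      card_empty, pow_zero]
  · calc ∑ j ∈ range i with blk j = blk i,
          2 ^ #(taggedGraph (blk i) (f (pos i)) ∩ taggedGraph (blk j) (f (pos j)))
        = ∑ j ∈ range i with blk j = blk i, 2 ^ #{x | f (pos i) x = f (pos j) x} :=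
          sum_congr rfl fun j hj => by rw [(mem_filter.1 hj).2, card_taggedGraph_inter]
      _ = ∑ q ∈ {j ∈ range i | blk j = blk i}.image pos, 2 ^ #{x | f (pos i) x = f q x} :=
          (sum_image (f := fun q => 2 ^ #{x | f (pos i) x = f q x}) (g := pos)
            fun j hj k hk hjk => by
            have := hpos j (mem_range.1 (mem_filter.1 hj).1) (mem_filter.1 hj).2
            have := hpos k (mem_range.1 (mem_filter.1 hk).1) (mem_filter.1 hk).2
            omega).symm
      _ ≤ ∑ q ∈ range (pos i), 2 ^ #{x | f (pos i) x = f q x} := by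
          refine sum_le_sum_of_subset (image_subset_iff.2 fun j hj => ?_)
          have := hpos j (mem_range.1 (mem_filter.1 hj).1) (mem_filter.1 hj).2
          have := mem_range.1 (mem_filter.1 hj).1
          exact mem_range.2 (by omega)
      _ ≤ 2 * pos i := hf _

end TaggedGraph

theorem Fin.sum_filter_lt_eq_sum_range {M : Type*} [AddCommMonoid M] {m : ℕ} (i : Fin m)
    (F : ℕ → M) : ∑ j ∈ univ.filter (· < i), F j = ∑ j ∈ range i, F j := by
  rw [filter_gt_eq_Iio, ← Nat.Iio_eq_range, ← Fin.map_valEmbedding_Iio, sum_map]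
  rfl

section Dyadic

/-- The indices `i < m` with `Nat.log 2 (m - i) = e` form the interval
`[m + 1 - 2 ^ (e + 1), m - 2 ^ e]`; the truncated subtraction makes the first block start at `0`. -/
def dyadicStart (m i : ℕ) : ℕ := m + 1 - 2 ^ (Nat.log 2 (m - i) + 1)

variable {m i j : ℕ}

theorem pow_log_two_le_and_lt_two_mul {n : ℕ} (hn : n ≠ 0) :
    2 ^ Nat.log 2 n ≤ n ∧ n < 2 * 2 ^ Nat.log 2 n := by
  rw [← pow_succ']
  exact ⟨Nat.pow_log_le_self 2 hn, Nat.lt_pow_succ_log_self one_lt_two n⟩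

theorem dyadicStart_le (hi : i < m) : dyadicStart m i ≤ i := by
  have := pow_log_two_le_and_lt_two_mul (Nat.sub_ne_zero_of_lt hi)
  rw [dyadicStart, pow_succ']
  omega

theorem add_sub_dyadicStart_lt (hi : i < m) : i + (i - dyadicStart m i) < m := by
  have := pow_log_two_le_and_lt_two_mul (Nat.sub_ne_zero_of_lt hi)
  rw [dyadicStart, pow_succ']
  omega

theorem log_sub_eq_iff_dyadicStart_le (hji : j < i) (hi : i < m) :
    Nat.log 2 (m - j) = Nat.log 2 (m - i) ↔ dyadicStart m i ≤ j := by
  have hi' := pow_log_two_le_and_lt_two_mul (Nat.sub_ne_zero_of_lt hi)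
  have hj' := pow_log_two_le_and_lt_two_mul (Nat.sub_ne_zero_of_lt (hji.trans hi))
  rw [dyadicStart, pow_succ']
  constructor
  · intro h
    rw [h] at hj'
    omega
  · intro h
    refine Nat.log_eq_of_pow_le_of_lt_pow (by omega) ?_
    rw [pow_succ']
    omega

theorem sum_two_pow_card_inter_dyadic_le {α β γ : Type*} [Fintype α] [DecidableEq α]
    [DecidableEq β] [DecidableEq γ] (f : ℕ → α → β)
    (hf : ∀ p, ∑ q ∈ range p, 2 ^ #{x | f p x = f q x} ≤ 2 * p) (blk : ℕ → γ)
    (hblk : ∀ j i, blk j = blk i ↔ Nat.log 2 (m - j) = Nat.log 2 (m - i)) (hi : i < m) :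
    ∑ j ∈ range i, 2 ^ #(taggedGraph (blk i) (f (i - dyadicStart m i)) ∩
      taggedGraph (blk j) (f (j - dyadicStart m j))) ≤ m - 1 := by
  have hblk_iff : ∀ j < i, blk j = blk i ↔ dyadicStart m i ≤ j := fun j hj =>
    (hblk j i).trans (log_sub_eq_iff_dyadicStart_le hj hi)
  calc _ ≤ #{j ∈ range i | blk j ≠ blk i} + 2 * (i - dyadicStart m i) := by
        refine sum_two_pow_card_inter_taggedGraph_le f hf blk _ i fun j hj hji => ?_
        have hstart : dyadicStart m j = dyadicStart m i := by
          rw [dyadicStart, dyadicStart, (hblk j i).1 hji]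
        have := (hblk_iff j hj).1 hji
        rw [hstart]
        omega
    _ ≤ dyadicStart m i + 2 * (i - dyadicStart m i) := by
        gcongr
        refine (card_le_card fun j hj => ?_).trans (card_range _).le
        rw [mem_filter, mem_range] at hj
        exact mem_range.2 (not_le.1 fun h => hj.2 ((hblk_iff j hj.1).2 h))
    _ ≤ m - 1 := by
        have := dyadicStart_le hi
        have := add_sub_dyadicStart_lt hi
        omega

end Dyadic

theorem log_lt_ceil_logb_four_mul {m : ℕ} (hm : m ≠ 0) :
    Nat.log 2 m < ⌈Real.logb 2 (4 * m)⌉₊ := by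
  refine Nat.lt_ceil.2 ((Real.lt_logb_iff_rpow_lt one_lt_two (by positivity)).2 ?_)
  have : 2 ^ Nat.log 2 m ≤ m := Nat.pow_log_le_self 2 hm
  rw [Real.rpow_natCast]
  exact_mod_cast (by omega : 2 ^ Nat.log 2 m < 4 * m)

/-- Lemma B.1 (Raz–Reingold–Vadhan, Lemma 17): existence of weak
(t,1)-designs S₁, …, S_m ⊆ [d], each of size t, with
d = t·⌈t/ln 2⌉·⌈log₂(4m)⌉ and ∑_{j<i} 2^{|Sᵢ ∩ Sⱼ|} ≤ m − 1 for every i. -/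
theorem stmt_6 (t m : ℕ) (ht : 1 ≤ t) (hm : 1 ≤ m) :
    ∃ d : ℕ, d = t * ⌈(t : ℝ) / Real.log 2⌉₊ * ⌈Real.logb 2 (4 * m)⌉₊ ∧
      ∃ S : Fin m → Finset (Fin d),
        (∀ i, (S i).card = t) ∧
        ∀ i : Fin m,
          ∑ j ∈ Finset.univ.filter (fun j : Fin m => j < i), 2 ^ ((S i ∩ S j).card)
            ≤ m - 1 := by
  classical
  set a := ⌈(t : ℝ) / Real.log 2⌉₊
  set K := ⌈Real.logb 2 (4 * m)⌉₊
  refine ⟨_, rfl, ?_⟩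
  have ha : 0 < a := Nat.ceil_pos.2 (by positivity)
  have hta : (t : ℝ) ≤ a * Real.log 2 := (div_le_iff₀ (by positivity)).1 (Nat.le_ceil _)
  have : Nonempty (Fin t → Fin a) := ⟨fun _ => ⟨0, ha⟩⟩
  obtain ⟨f, hf⟩ := exists_seq_sum_two_pow_card_agree_le (α := Fin t) (β := Fin a)
    (by simpa using hta)
  let blk : ℕ → Fin K := fun i => ⟨Nat.log 2 (m - i),
    (Nat.log_mono_right (m.sub_le i)).trans_lt (log_lt_ceil_logb_four_mul (by omega))⟩
  let e : Fin K × Fin t × Fin a ≃ Fin (t * a * K) := Fintype.equivFinOfCardEq (by simp; ring)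
  let G : ℕ → Finset (Fin K × Fin t × Fin a) := fun i =>
    taggedGraph (blk i) (f (i - dyadicStart m i))
  refine ⟨fun i => (G i).map e.toEmbedding, fun i => by simp [G, card_taggedGraph], fun i => ?_⟩
  simp only [← map_inter, card_map, Fin.sum_filter_lt_eq_sum_range i fun j => 2 ^ #(G i ∩ G j)]
  exact sum_two_pow_card_inter_dyadic_le f hf blk (fun _ _ => Fin.ext_iff) i.2
end

section
/- Let C : {0,1}ⁿ → {0,1}^n̄ be an (ε, L)-list decodable code, and define Ext_C : {0,1}ⁿ × {0, …, n̄−1} → {0,1} by Ext_C(x, y) = C(x)_y (the y-th bit of the codeword of x). Then Ext_C is a (log₂ L + log₂(1/(2ε)), 2ε)-strong extractor: for every probability distribution P on {0,1}ⁿ with P(x) ≤ 2^(−(log₂ L + log₂(1/(2ε)))) for all x, and Y uniformly distributed on {0, …, n̄−1} independently of X ~ P, the statistical distance between the joint distribution of (Ext_C(X,Y), Y) and the joint distribution of (U, Y), where U is a uniform bit independent of Y, is at most 2ε. -/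
/-!
Let `w` be the majority word: `w y` is the more likely value of the bit `C(X)_y`. For each seed `y`
both bits deviate from `1/2` by `P[C(X)_y = w y] - 1/2`, so the statistical distance equals the
expected relative agreement of `C(X)` with `w`, minus `1/2`. By list decodability at most `L`
codewords lie close to `w`; they carry mass at most `L · 2ε/L = 2ε`, hence raise the expected
agreement above `n̄/2` by at most `ε n̄`. Every other codeword agrees with `w` on fewer than
`(1/2 + ε) n̄` positions.
-/

open Finset

theorem Real.rpow_neg_logb_add_logb {b x y : ℝ} (hb : 0 < b) (hb₁ : b ≠ 1) (hx : 0 < x)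
    (hy : 0 < y) : b ^ (-(logb b x + logb b y)) = (x * y)⁻¹ := by
  rw [← logb_mul hx.ne' hy.ne', rpow_neg hb.le, rpow_logb hb hb₁ (mul_pos hx hy)]

theorem exists_sum_abs_sub_half_eq {f : Bool → ℝ} (hf : ∑ b, f b = 1) :
    ∃ m, ∑ b, |f b - 1 / 2| = 2 * (f m - 1 / 2) := by
  rw [Fintype.sum_bool] at hf ⊢
  rcases le_total (1 / 2) (f true) with h | h
  · exact ⟨true, by rw [abs_of_nonneg (by linarith), abs_of_nonpos (by linarith)]; linarith⟩
  · exact ⟨false, by rw [abs_of_nonpos (by linarith), abs_of_nonneg (by linarith)]; linarith⟩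

section Hamming

variable {α ι β : Type*} [Fintype α] [Fintype ι] [DecidableEq β]

theorem card_filter_eq_add_hammingDist (x y : ι → β) :
    #{i | x i = y i} + hammingDist x y = Fintype.card ι :=
  card_filter_add_card_filter_not _

theorem sum_agreement_mass_sub_half_eq {P : α → ℝ} (hP1 : ∑ x, P x = 1) (c : α → ι → β)
    (w : ι → β) :
    ∑ i, (∑ x with c x i = w i, P x - 1 / 2)
      = ∑ x, P x * (Fintype.card ι / 2 - hammingDist (c x) w) := by
  have hagree (x : α) : (#{i | c x i = w i} : ℝ) = Fintype.card ι - hammingDist (c x) w := by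
    rw [eq_sub_iff_add_eq]; exact_mod_cast card_filter_eq_add_hammingDist (c x) w
  calc ∑ i, (∑ x with c x i = w i, P x - 1 / 2)
      = ∑ x, ∑ i with c x i = w i, P x - Fintype.card ι / 2 := by
        rw [sum_sub_distrib, sum_comm' (t' := univ) (s' := fun x => {i | c x i = w i})
          (by simp)]
        simp [div_eq_mul_inv]
    _ = ∑ x, P x * (Fintype.card ι / 2 - hammingDist (c x) w) := by
        have hmass : (Fintype.card ι : ℝ) / 2 = ∑ x, P x * (Fintype.card ι / 2) := by
          rw [← sum_mul, hP1, one_mul]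
        conv_lhs => rw [hmass]
        rw [← sum_sub_distrib]
        refine sum_congr rfl fun x _ => ?_
        rw [sum_const, nsmul_eq_mul, hagree]
        ring

theorem sum_mul_half_sub_hammingDist_le {P : α → ℝ} {ε L : ℝ} (hP0 : ∀ x, 0 ≤ P x)
    (hP1 : ∑ x, P x = 1) (hε : 0 ≤ ε) (hL : 0 < L) (hPmax : ∀ x, P x ≤ 2 * ε / L)
    {c : α → ι → β} {w : ι → β}
    (hlist : (#{x | (hammingDist (c x) w : ℝ) ≤ (1 / 2 - ε) * Fintype.card ι} : ℝ) ≤ L) :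
    ∑ x, P x * (Fintype.card ι / 2 - hammingDist (c x) w) ≤ 2 * ε * Fintype.card ι := by
  set n : ℝ := (Fintype.card ι : ℝ)
  have hn : 0 ≤ n := Nat.cast_nonneg _
  rw [← sum_filter_add_sum_filter_not univ (fun x => (hammingDist (c x) w : ℝ) ≤ (1 / 2 - ε) * n)]
  have hnear : ∑ x with (hammingDist (c x) w : ℝ) ≤ (1 / 2 - ε) * n,
      P x * (n / 2 - hammingDist (c x) w) ≤ ε * n :=
    calc _ ≤ ∑ x with (hammingDist (c x) w : ℝ) ≤ (1 / 2 - ε) * n, 2 * ε / L * (n / 2) :=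
          sum_le_sum fun x _ => (mul_le_mul_of_nonneg_left (by simp) (hP0 x)).trans
            (mul_le_mul_of_nonneg_right (hPmax x) (by positivity))
      _ = #{x | (hammingDist (c x) w : ℝ) ≤ (1 / 2 - ε) * n} * (2 * ε / L * (n / 2)) := by
          rw [sum_const, nsmul_eq_mul]
      _ ≤ L * (2 * ε / L * (n / 2)) := by gcongr
      _ = ε * n := by field_simp
  have hfar : ∑ x with ¬(hammingDist (c x) w : ℝ) ≤ (1 / 2 - ε) * n,
      P x * (n / 2 - hammingDist (c x) w) ≤ ε * n :=
    calc _ ≤ ∑ x with ¬(hammingDist (c x) w : ℝ) ≤ (1 / 2 - ε) * n, P x * (ε * n) :=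
          sum_le_sum fun x hx => mul_le_mul_of_nonneg_left
            (by linarith [not_le.1 (mem_filter.1 hx).2]) (hP0 x)
      _ = (∑ x with ¬(hammingDist (c x) w : ℝ) ≤ (1 / 2 - ε) * n, P x) * (ε * n) :=
          (sum_mul ..).symm
      _ ≤ (∑ x, P x) * (ε * n) := by
          gcongr
          · exact fun x _ _ => hP0 x
          · exact filter_subset _ _
      _ = ε * n := by rw [hP1, one_mul]
  linarith

end Hamming

theorem stmt_8_general (n nbar : ℕ) (ε L : ℝ) (hε : 0 < ε) (hL : 0 < L)
    (C : (Fin n → Bool) → Fin nbar → Bool)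
    (hC : ∀ w : Fin nbar → Bool,
      ((Finset.univ.filter
          (fun x : Fin n → Bool =>
            (hammingDist (C x) w : ℝ) ≤ (1 / 2 - ε) * nbar)).card : ℝ) ≤ L) :
    ∀ P : (Fin n → Bool) → ℝ,
      (∀ x, 0 ≤ P x) → (∑ x, P x = 1) →
      (∀ x, P x ≤ (2 : ℝ) ^ (-(Real.logb 2 L + Real.logb 2 (1 / (2 * ε))))) →
      (1 / 2) * ∑ b : Bool, ∑ y : Fin nbar,
          |(1 / (nbar : ℝ)) * ∑ x ∈ Finset.univ.filter (fun x : Fin n → Bool => C x y = b), P x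
            - (1 / (nbar : ℝ)) * (1 / 2)|
        ≤ 2 * ε := by
  intro P hP0 hP1 hPmax
  have hP_le (x) : P x ≤ 2 * ε / L := by
    convert hPmax x using 1
    rw [Real.rpow_neg_logb_add_logb two_pos (by norm_num) hL (by positivity)]
    field_simp
  choose w hw using fun y : Fin nbar =>
    exists_sum_abs_sub_half_eq ((sum_fiberwise univ (C · y) P).trans hP1)
  have hbias := sum_mul_half_sub_hammingDist_le (c := C) (w := w) hP0 hP1 hε.le hL hP_le
    (by simpa only [Fintype.card_fin] using hC w)
  rw [Fintype.card_fin] at hbias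
  calc (1 / 2) * ∑ b : Bool, ∑ y : Fin nbar,
          |(1 / (nbar : ℝ)) * ∑ x with C x y = b, P x - (1 / (nbar : ℝ)) * (1 / 2)|
      = 1 / nbar * ∑ y, (∑ x with C x y = w y, P x - 1 / 2) := by
        simp only [← mul_sub, abs_mul, ← mul_sum]
        rw [sum_comm, abs_of_nonneg (by positivity)]
        simp only [hw, ← mul_sum]
        ring
    _ = 1 / nbar * ∑ x, P x * (nbar / 2 - hammingDist (C x) w) := by
        rw [sum_agreement_mass_sub_half_eq hP1, Fintype.card_fin]
    _ ≤ 1 / nbar * (2 * ε * nbar) := by gcongr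
    _ ≤ 2 * ε := by
        rw [one_div_mul_eq_div, mul_div_assoc]
        exact mul_le_of_le_one_right (by positivity) (div_self_le_one _)

/-- Lemma B.2 (De–Portmann–Vidick–Renner, Theorem C.3): if
C : {0,1}ⁿ → {0,1}^n̄ is an (ε, L)-list decodable code, then
Ext_C(x, y) = C(x)_y is a (log₂ L + log₂(1/(2ε)), 2ε)-strong extractor. -/
theorem stmt_8 (n nbar : ℕ) (hnbar : 1 ≤ nbar) (ε L : ℝ) (hε : 0 < ε) (hL : 0 < L)
    (C : (Fin n → Bool) → Fin nbar → Bool)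
    (hC : ∀ w : Fin nbar → Bool,
      ((Finset.univ.filter
          (fun x : Fin n → Bool =>
            (hammingDist (C x) w : ℝ) ≤ (1 / 2 - ε) * nbar)).card : ℝ) ≤ L) :
    ∀ P : (Fin n → Bool) → ℝ,
      (∀ x, 0 ≤ P x) → (∑ x, P x = 1) →
      (∀ x, P x ≤ (2 : ℝ) ^ (-(Real.logb 2 L + Real.logb 2 (1 / (2 * ε))))) →
      (1 / 2) * ∑ b : Bool, ∑ y : Fin nbar,
          |(1 / (nbar : ℝ)) * ∑ x ∈ Finset.univ.filter (fun x : Fin n → Bool => C x y = b), P x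
            - (1 / (nbar : ℝ)) * (1 / 2)|
        ≤ 2 * ε :=
  stmt_8_general n nbar ε L hε hL C hC
end

section
/- Let n ≥ 1 be a natural number, let k and m be real numbers with 0 < m < k ≤ n, set ε_T = 3·m·2^(−(k−m)/8 + 1/4) and d = ⌈(7 + k − m + log₂ n)² · log₂(4m)/ln 2⌉. Then there exists a function Ext : {0,1}ⁿ × {0,1}^d → {0,1}^⌊m⌋ which is a (k, ε_T)-strong extractor: for every probability distribution X on {0,1}ⁿ with P[X = x] ≤ 2^(−k) for all x, and Y uniform on {0,1}^d independent of X, the statistical distance between the distribution of (Ext(X,Y), Y) and the distribution of (U, Y), with U uniform on {0,1}^⌊m⌋ independent of Y, is at most ε_T. -/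
open Finset

lemma half_abs_sum_eq {ι : Type*} [Fintype ι] (a b : ι → ℝ)
    (h : ∑ i, a i = ∑ i, b i) :
    (1/2) * ∑ i, |a i - b i|
      = ∑ i ∈ Finset.univ.filter (fun i => b i < a i), (a i - b i) := by
  have h1 : ∀ i, |a i - b i| = 2 * (if b i < a i then a i - b i else 0) - (a i - b i) := by
    intro i
    rcases le_or_gt (a i) (b i) with hle | hlt
    · rw [if_neg (not_lt.mpr hle), abs_of_nonpos (by linarith)]; ring
    · rw [if_pos hlt, abs_of_pos (by linarith)]; ring
  rw [Finset.sum_congr rfl (fun i _ => h1 i)]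
  rw [Finset.sum_sub_distrib, Finset.sum_sub_distrib, h, ← Finset.mul_sum,
    ← Finset.sum_filter]
  ring

lemma exists_topK {α : Type*} [Fintype α] [DecidableEq α] (h : α → ℝ) :
    ∀ K : ℕ, K ≤ Fintype.card α →
      ∃ S : Finset α, S.card = K ∧ ∀ x, x ∉ S → ∀ x' ∈ S, h x ≤ h x' := by
  intro K
  induction K with
  | zero => intro _; exact ⟨∅, by simp⟩
  | succ K ih =>
    intro hK
    obtain ⟨S, hcard, htop⟩ := ih (le_of_lt (Nat.lt_of_succ_le hK))
    have hne : Sᶜ.Nonempty := by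
      rw [← Finset.card_pos, Finset.card_compl, hcard]
      omega
    obtain ⟨x0, hx0, hx0max⟩ := Finset.exists_max_image Sᶜ h hne
    have hx0S : x0 ∉ S := by simpa using hx0
    refine ⟨insert x0 S, by rw [Finset.card_insert_of_notMem hx0S, hcard], ?_⟩
    intro x hx x' hx'
    have hxS : x ∉ S := fun hc => hx (Finset.mem_insert_of_mem hc)
    rcases Finset.mem_insert.mp hx' with rfl | hx'S
    · exact hx0max x (by simpa using hxS)
    · exact htop x hxS x' hx'S

lemma weighted_le_top {α : Type*} [Fintype α] (P h : α → ℝ) (c : ℝ) (S : Finset α)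
    (hP0 : ∀ x, 0 ≤ P x) (hPc : ∀ x, P x ≤ c) (hPsum : ∑ x, P x = 1)
    (hh0 : ∀ x, 0 ≤ h x) (htop : ∀ x, x ∉ S → ∀ x' ∈ S, h x ≤ h x')
    (hcK : 1 ≤ c * S.card) :
    ∑ x, P x * h x ≤ c * ∑ x ∈ S, h x := by
  classical
  have hSne : S.Nonempty := by
    rcases S.eq_empty_or_nonempty with rfl | hne
    · simp at hcK; linarith
    · exact hne
  obtain ⟨x0, hx0S, hx0min⟩ := Finset.exists_min_image S h hSne
  set m0 := h x0 with hm0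
  have hm00 : 0 ≤ m0 := hh0 x0
  -- split total sum
  have hsplit : ∑ x, P x * h x = ∑ x ∈ S, P x * h x + ∑ x ∈ Sᶜ, P x * h x :=
    (Finset.sum_add_sum_compl S _).symm
  have hPsplit : ∑ x ∈ S, P x + ∑ x ∈ Sᶜ, P x = 1 := by
    rw [Finset.sum_add_sum_compl]; exact hPsum
  -- outside bound
  have hout : ∑ x ∈ Sᶜ, P x * h x ≤ (∑ x ∈ Sᶜ, P x) * m0 := by
    rw [Finset.sum_mul]
    apply Finset.sum_le_sum
    intro x hx
    have hxS : x ∉ S := by simpa using hx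
    exact mul_le_mul_of_nonneg_left (htop x hxS x0 hx0S) (hP0 x)
  -- inside slack
  have hin : (∑ x ∈ Sᶜ, P x) * m0 ≤ ∑ x ∈ S, (c - P x) * h x := by
    have h1 : ∀ x ∈ S, (c - P x) * m0 ≤ (c - P x) * h x := by
      intro x hx
      exact mul_le_mul_of_nonneg_left (hx0min x hx) (by linarith [hPc x])
    calc (∑ x ∈ Sᶜ, P x) * m0 = (1 - ∑ x ∈ S, P x) * m0 := by
            rw [← hPsplit]; ring
      _ ≤ (c * S.card - ∑ x ∈ S, P x) * m0 := by
            apply mul_le_mul_of_nonneg_right _ hm00; linarith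
      _ = ∑ x ∈ S, (c - P x) * m0 := by
            simp only [sub_mul, Finset.sum_sub_distrib, Finset.sum_const,
              nsmul_eq_mul, ← Finset.sum_mul]; ring
      _ ≤ ∑ x ∈ S, (c - P x) * h x := Finset.sum_le_sum h1
  have hfin : ∑ x ∈ S, P x * h x + ∑ x ∈ S, (c - P x) * h x = c * ∑ x ∈ S, h x := by
    rw [← Finset.sum_add_distrib, Finset.mul_sum]
    apply Finset.sum_congr rfl; intro x _; ring
  linarith [hsplit, hout, hin, hfin]

section
variable {X Y Z : Type*} [Fintype X] [Fintype Y] [Fintype Z]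
  [DecidableEq X] [DecidableEq Y] [DecidableEq Z] [Nonempty Z]

lemma exists_good_ext (K : ℕ) (e : ℝ) (he0 : 0 < e) (he1 : e ≤ 1)
    (hcond : ((Fintype.card X : ℝ) ^ K) *
        (2:ℝ) ^ (Fintype.card Z * Fintype.card Y) *
        Real.exp (-(e^2 * K * Fintype.card Y) / 4) < 1) :
    ∃ F : (X × Y) → Z, ∀ (T : Finset (Z × Y)) (S : Finset X), S.card = K →
      (∑ x ∈ S, ((Finset.univ.filter fun y => (F (x, y), y) ∈ T).card : ℝ))
        ≤ K * T.card / Fintype.card Z + e * K * Fintype.card Y := by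
  classical
  set NZ := Fintype.card Z with hNZ
  set NY := Fintype.card Y with hNY
  set NX := Fintype.card X with hNX
  have hNZ0 : 0 < NZ := Fintype.card_pos
  have hNZ0' : (0:ℝ) < NZ := by exact_mod_cast hNZ0
  set lam := e/2 with hlam
  have hl0 : 0 < lam := by positivity
  have hl1 : lam ≤ 1 := by rw [hlam]; linarith
  set W : ((X × Y) → Z) → Finset X → Finset (Z × Y) → ℝ :=
    fun G S T => ∑ x ∈ S, ((Finset.univ.filter fun y => (G (x, y), y) ∈ T).card : ℝ)
    with hW
  set θ : Finset (Z × Y) → ℝ :=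
    fun T => K * T.card / NZ + e * K * NY with hθ
  -- key per-pair Chernoff bound
  have key : ∀ (S : Finset X) (T : Finset (Z × Y)), S.card = K →
      ((Finset.univ.filter (fun G : (X × Y) → Z => θ T < W G S T)).card : ℝ)
        ≤ (NZ:ℝ) ^ (NX * NY) * Real.exp (-(e^2 * K * NY)/4) := by
    intro S T hS
    set nn : Y → ℕ := fun y => (Finset.univ.filter fun c : Z => (c, y) ∈ T).card with hnn
    have hnnle : ∀ y, nn y ≤ NZ := fun y => le_trans (Finset.card_filter_le _ _)
      (le_of_eq (Finset.card_univ))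
    have hnnsum : ∑ y, nn y = T.card := by
      rw [Finset.card_eq_sum_card_fiberwise (f := Prod.snd) (t := Finset.univ)
        (fun x _ => Finset.mem_univ _)]
      apply Finset.sum_congr rfl
      intro y _
      show (Finset.univ.filter fun c : Z => (c, y) ∈ T).card
          = (T.filter fun p => p.2 = y).card
      refine Finset.card_bij' (fun c _ => (c, y)) (fun p _ => p.1) ?_ ?_ ?_ ?_
      · intro c hc
        simp only [Finset.mem_filter] at hc ⊢
        exact ⟨hc.2, trivial⟩
      · intro p hp
        simp only [Finset.mem_filter] at hp ⊢
        refine ⟨Finset.mem_univ _, ?_⟩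
        have hpy : p = (p.1, y) := by
          rw [Prod.ext_iff]; exact ⟨rfl, hp.2⟩
        rw [← hpy]; exact hp.1
      · intro c hc; rfl
      · intro p hp
        simp only [Finset.mem_filter] at hp
        rw [Prod.ext_iff]; exact ⟨rfl, hp.2.symm⟩
    set g : (X × Y) → Z → ℝ :=
      fun p c => if p.1 ∈ S ∧ (c, p.2) ∈ T then Real.exp lam else 1 with hg
    -- step 1 : exp(lam W) as a product
    have step1 : ∀ G : (X × Y) → Z,
        Real.exp (lam * W G S T) = ∏ p : X × Y, g p (G p) := by
      intro G
      have h1 : lam * W G S T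
          = ∑ p ∈ S ×ˢ (Finset.univ : Finset Y),
              (if (G p, p.2) ∈ T then lam else 0) := by
        rw [Finset.sum_product, hW]
        simp only []
        rw [Finset.mul_sum]
        apply Finset.sum_congr rfl
        intro x _
        rw [Finset.card_filter]
        push_cast
        rw [Finset.mul_sum]
        apply Finset.sum_congr rfl
        intro y _
        split_ifs <;> simp
      rw [h1, Real.exp_sum]
      calc ∏ p ∈ S ×ˢ (Finset.univ : Finset Y),
              Real.exp (if (G p, p.2) ∈ T then lam else 0)
          = ∏ p ∈ S ×ˢ (Finset.univ : Finset Y), g p (G p) := by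
            apply Finset.prod_congr rfl
            intro p hp
            have hp1 : p.1 ∈ S := (Finset.mem_product.mp hp).1
            simp only [hg, hp1, true_and]
            split_ifs
            · rfl
            · exact Real.exp_zero
        _ = ∏ p : X × Y, g p (G p) := by
            apply Finset.prod_subset (Finset.subset_univ _)
            intro p _ hp
            have hp1 : p.1 ∉ S := fun hc =>
              hp (Finset.mem_product.mpr ⟨hc, Finset.mem_univ _⟩)
            simp [hg, hp1]
    -- step 2 : factorization of the sum over all functions
    have step2 : ∑ G : (X × Y) → Z, ∏ p : X × Y, g p (G p)
        = ∏ p : X × Y, ∑ c : Z, g p c := by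
      rw [Finset.prod_univ_sum (fun _ => (Finset.univ : Finset Z)) g,
        Fintype.piFinset_univ]
    -- step 3 : per-factor bound
    have hexp : Real.exp lam ≤ 1 + lam + lam^2 := by
      have hb := Real.exp_bound (x := lam) (by rw [abs_of_pos hl0]; exact hl1)
        (n := 2) (by norm_num)
      have h2 : ∑ i ∈ Finset.range 2, lam ^ i / (i.factorial : ℝ) = 1 + lam := by
        simp [Finset.sum_range_succ]
      rw [h2, abs_of_pos hl0] at hb
      norm_num [Nat.factorial] at hb
      have h3 := abs_le.mp hb
      nlinarith [h3.1, h3.2, sq_nonneg lam, hl0, hl1]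
    have step3 : ∀ p : X × Y, ∑ c : Z, g p c
        ≤ (NZ:ℝ) * Real.exp (if p.1 ∈ S then lam * nn p.2 / NZ + lam^2 else 0) := by
      intro p
      by_cases hp1 : p.1 ∈ S
      · simp only [hp1, if_true, hg, true_and]
        have hsum : ∑ c : Z, (if (c, p.2) ∈ T then Real.exp lam else 1)
            = (NZ:ℝ) + (nn p.2) * (Real.exp lam - 1) := by
          have : ∀ c : Z, (if (c, p.2) ∈ T then Real.exp lam else 1)
              = 1 + (if (c, p.2) ∈ T then Real.exp lam - 1 else 0) := by
            intro c; split_ifs <;> ring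
          rw [Finset.sum_congr rfl (fun c _ => this c), Finset.sum_add_distrib]
          rw [Finset.sum_const, Finset.card_univ, ← Finset.sum_filter,
            Finset.sum_const]
          simp [hnn, nsmul_eq_mul]
          rfl
        rw [hsum]
        have hq0 : (0:ℝ) ≤ (nn p.2) / NZ := by positivity
        have hq1 : ((nn p.2) : ℝ) / NZ ≤ 1 := by
          rw [div_le_one hNZ0']; exact_mod_cast hnnle p.2
        have h1 : (NZ:ℝ) + (nn p.2) * (Real.exp lam - 1)
            ≤ (NZ:ℝ) * (1 + ((nn p.2)/NZ) * (lam + lam^2)) := by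
          have : ((nn p.2):ℝ) * (Real.exp lam - 1) ≤ (nn p.2) * (lam + lam^2) := by
            apply mul_le_mul_of_nonneg_left (by linarith) (by positivity)
          have hNZne : (NZ:ℝ) ≠ 0 := ne_of_gt hNZ0'
          field_simp
          nlinarith [this]
        have h2 : 1 + ((nn p.2)/NZ) * (lam + lam^2)
            ≤ Real.exp (lam * nn p.2 / NZ + lam^2) := by
          calc 1 + ((nn p.2)/NZ) * (lam + lam^2)
              ≤ Real.exp (((nn p.2)/NZ) * (lam + lam^2)) := by
                linarith [Real.add_one_le_exp (((nn p.2):ℝ)/NZ * (lam + lam^2))]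
            _ ≤ Real.exp (lam * nn p.2 / NZ + lam^2) := by
                apply Real.exp_le_exp.mpr
                have : ((nn p.2):ℝ)/NZ * (lam + lam^2)
                    = lam * nn p.2/NZ + ((nn p.2):ℝ)/NZ * lam^2 := by ring
                rw [this]
                have := mul_le_of_le_one_left (sq_nonneg lam) hq1
                linarith
        calc (NZ:ℝ) + (nn p.2) * (Real.exp lam - 1)
            ≤ (NZ:ℝ) * (1 + ((nn p.2)/NZ) * (lam + lam^2)) := h1
          _ ≤ (NZ:ℝ) * Real.exp (lam * nn p.2 / NZ + lam^2) := by
              apply mul_le_mul_of_nonneg_left h2 (le_of_lt hNZ0')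
      · simp only [hp1, if_false, hg, false_and]
        simp [Finset.card_univ]
        exact le_rfl
    -- combine: sum over functions bounded
    have step4 : ∑ G : (X × Y) → Z, Real.exp (lam * W G S T)
        ≤ (NZ:ℝ) ^ (NX * NY)
          * Real.exp (lam * K * T.card / NZ + lam^2 * K * NY) := by
      calc ∑ G : (X × Y) → Z, Real.exp (lam * W G S T)
          = ∏ p : X × Y, ∑ c : Z, g p c := by
            rw [← step2]; exact Finset.sum_congr rfl (fun G _ => step1 G)
        _ ≤ ∏ p : X × Y,
              ((NZ:ℝ) * Real.exp (if p.1 ∈ S then lam * nn p.2 / NZ + lam^2 else 0)) := by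
            apply Finset.prod_le_prod
            · intro p _
              apply Finset.sum_nonneg; intro c _
              have : (0:ℝ) ≤ g p c := by
                simp only [hg]
                split_ifs <;> positivity
              exact this
            · intro p _; exact step3 p
        _ = (NZ:ℝ) ^ (NX * NY)
            * Real.exp (∑ p : X × Y, (if p.1 ∈ S then lam * nn p.2 / NZ + lam^2 else 0)) := by
            rw [Finset.prod_mul_distrib, Finset.prod_const, Finset.card_univ,
              Fintype.card_prod, ← Real.exp_sum]
        _ = (NZ:ℝ) ^ (NX * NY)
            * Real.exp (lam * K * T.card / NZ + lam^2 * K * NY) := by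
            congr 1
            rw [Fintype.sum_prod_type]
            have h1 : ∀ x : X, ∑ y : Y,
                (if (x, y).1 ∈ S then lam * nn (x, y).2 / NZ + lam^2 else 0)
                = if x ∈ S then (lam * T.card / NZ + lam^2 * NY) else 0 := by
              intro x
              by_cases hx : x ∈ S
              · simp only [hx, if_true]
                rw [Finset.sum_add_distrib, Finset.sum_const, Finset.card_univ]
                have hsd : ∑ y : Y, lam * (nn y : ℝ) / NZ = lam * T.card / NZ := by
                  rw [← hnnsum]
                  push_cast
                  rw [Finset.mul_sum, Finset.sum_div]
                rw [hsd, nsmul_eq_mul]; ring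
              · simp [hx]
            rw [Finset.sum_congr rfl (fun x _ => h1 x), ← Finset.sum_filter,
              Finset.sum_const]
            have : Finset.univ.filter (fun x => x ∈ S) = S := by
              ext x; simp
            rw [this, hS, nsmul_eq_mul]; ring
    -- Markov
    have markov : ((Finset.univ.filter (fun G : (X × Y) → Z => θ T < W G S T)).card : ℝ)
        * Real.exp (lam * θ T) ≤ ∑ G : (X × Y) → Z, Real.exp (lam * W G S T) := by
      calc ((Finset.univ.filter (fun G : (X × Y) → Z => θ T < W G S T)).card : ℝ)
            * Real.exp (lam * θ T)
          = ∑ _G ∈ Finset.univ.filter (fun G : (X × Y) → Z => θ T < W G S T),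
              Real.exp (lam * θ T) := by rw [Finset.sum_const, nsmul_eq_mul]
        _ ≤ ∑ G ∈ Finset.univ.filter (fun G : (X × Y) → Z => θ T < W G S T),
              Real.exp (lam * W G S T) := by
            apply Finset.sum_le_sum
            intro G hG
            have := (Finset.mem_filter.mp hG).2
            apply Real.exp_le_exp.mpr
            apply mul_le_mul_of_nonneg_left (le_of_lt this) (le_of_lt hl0)
        _ ≤ ∑ G : (X × Y) → Z, Real.exp (lam * W G S T) := by
            apply Finset.sum_le_sum_of_subset_of_nonneg (Finset.subset_univ _)
            intro G _ _; positivity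
    have hexpθ : (0:ℝ) < Real.exp (lam * θ T) := Real.exp_pos _
    rw [← le_div_iff₀ hexpθ] at markov
    calc ((Finset.univ.filter (fun G : (X × Y) → Z => θ T < W G S T)).card : ℝ)
        ≤ (∑ G : (X × Y) → Z, Real.exp (lam * W G S T)) / Real.exp (lam * θ T) :=
          markov
      _ ≤ ((NZ:ℝ) ^ (NX * NY)
            * Real.exp (lam * K * T.card / NZ + lam^2 * K * NY)) / Real.exp (lam * θ T) := by
          gcongr
      _ = (NZ:ℝ) ^ (NX * NY) * Real.exp (-(e^2 * K * NY)/4) := by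
          rw [mul_div_assoc, ← Real.exp_sub]
          congr 2
          rw [hθ, hlam]
          ring
  -- union bound
  by_contra hbad
  push_neg at hbad
  have hcover : (Finset.univ : Finset ((X × Y) → Z)) ⊆
      ((Finset.powersetCard K (Finset.univ : Finset X)) ×ˢ
        (Finset.univ : Finset (Finset (Z × Y)))).biUnion
        (fun p => Finset.univ.filter (fun G : (X × Y) → Z => θ p.2 < W G p.1 p.2)) := by
    intro G _
    obtain ⟨T, S, hScard, hGT⟩ := hbad G
    apply Finset.mem_biUnion.mpr
    refine ⟨(S, T), ?_, ?_⟩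
    · apply Finset.mem_product.mpr
      exact ⟨Finset.mem_powersetCard_univ.mpr hScard, Finset.mem_univ _⟩
    · exact Finset.mem_filter.mpr ⟨Finset.mem_univ _, hGT⟩
  have hcards : ((NZ:ℝ) ^ (NX * NY) : ℝ)
      ≤ ((NX:ℝ)^K * (2:ℝ)^(NZ * NY)) * ((NZ:ℝ) ^ (NX * NY) * Real.exp (-(e^2 * K * NY)/4)) := by
    have h1 : (Fintype.card ((X × Y) → Z) : ℝ) = (NZ:ℝ) ^ (NX * NY) := by
      rw [Fintype.card_fun, Fintype.card_prod]
      push_cast; ring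
    have h2 : ((Finset.univ : Finset ((X × Y) → Z)).card : ℝ)
        ≤ ∑ p ∈ (Finset.powersetCard K (Finset.univ : Finset X)) ×ˢ
            (Finset.univ : Finset (Finset (Z × Y))),
            ((Finset.univ.filter (fun G : (X × Y) → Z => θ p.2 < W G p.1 p.2)).card : ℝ) := by
      have := Finset.card_le_card hcover
      have h3 := Finset.card_biUnion_le (s := (Finset.powersetCard K (Finset.univ : Finset X)) ×ˢ
            (Finset.univ : Finset (Finset (Z × Y))))
            (t := fun p => Finset.univ.filter (fun G : (X × Y) → Z => θ p.2 < W G p.1 p.2))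
      have h4 : (Finset.univ : Finset ((X × Y) → Z)).card
          ≤ ∑ p ∈ (Finset.powersetCard K (Finset.univ : Finset X)) ×ˢ
              (Finset.univ : Finset (Finset (Z × Y))),
              (Finset.univ.filter (fun G : (X × Y) → Z => θ p.2 < W G p.1 p.2)).card :=
        le_trans this h3
      exact_mod_cast h4
    have h5 : ∑ p ∈ (Finset.powersetCard K (Finset.univ : Finset X)) ×ˢ
            (Finset.univ : Finset (Finset (Z × Y))),
            ((Finset.univ.filter (fun G : (X × Y) → Z => θ p.2 < W G p.1 p.2)).card : ℝ)
        ≤ ∑ _p ∈ (Finset.powersetCard K (Finset.univ : Finset X)) ×ˢ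
            (Finset.univ : Finset (Finset (Z × Y))),
            ((NZ:ℝ) ^ (NX * NY) * Real.exp (-(e^2 * K * NY)/4)) := by
      apply Finset.sum_le_sum
      intro p hp
      have hp1 := Finset.mem_powersetCard_univ.mp (Finset.mem_product.mp hp).1
      exact key p.1 p.2 hp1
    rw [Finset.sum_const, nsmul_eq_mul] at h5
    have h6 : ((Finset.powersetCard K (Finset.univ : Finset X)) ×ˢ
        (Finset.univ : Finset (Finset (Z × Y)))).card
        ≤ NX ^ K * 2 ^ (NZ * NY) := by
      rw [Finset.card_product, Finset.card_powersetCard, Finset.card_univ,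
        Finset.card_univ, Fintype.card_finset, Fintype.card_prod]
      exact Nat.mul_le_mul_right _ (Nat.choose_le_pow _ _)
    have h7 : (((Finset.powersetCard K (Finset.univ : Finset X)) ×ˢ
        (Finset.univ : Finset (Finset (Z × Y)))).card : ℝ)
        ≤ (NX:ℝ)^K * (2:ℝ)^(NZ * NY) := by exact_mod_cast h6
    calc ((NZ:ℝ) ^ (NX * NY) : ℝ)
        = ((Finset.univ : Finset ((X × Y) → Z)).card : ℝ) := by
          rw [Finset.card_univ, h1]
      _ ≤ _ := h2
      _ ≤ (((Finset.powersetCard K (Finset.univ : Finset X)) ×ˢ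
            (Finset.univ : Finset (Finset (Z × Y)))).card : ℝ)
            * ((NZ:ℝ) ^ (NX * NY) * Real.exp (-(e^2 * K * NY)/4)) := h5
      _ ≤ ((NX:ℝ)^K * (2:ℝ)^(NZ * NY))
            * ((NZ:ℝ) ^ (NX * NY) * Real.exp (-(e^2 * K * NY)/4)) := by
          apply mul_le_mul_of_nonneg_right h7 (by positivity)
  have hNZP : (0:ℝ) < (NZ:ℝ) ^ (NX * NY) := by positivity
  nlinarith [hcards, hcond, hNZP,
    mul_lt_mul_of_pos_right hcond hNZP]

end

set_option maxHeartbeats 4000000 in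
/-- Classical content of Lemma 4.1: Trevisan's extractor with input length n,
min-entropy k, output length ⌊m⌋ and seed length
d = ⌈(7 + k − m + log₂ n)²·log₂(4m)/ln 2⌉ is a (k, ε_T)-strong extractor with
ε_T = 3·m·2^(−(k−m)/8 + 1/4). -/
theorem stmt_9 (n : ℕ) (hn : 1 ≤ n) (k m : ℝ) (hm : 0 < m) (hmk : m < k) (hkn : k ≤ n)
    (εT : ℝ) (hεT : εT = 3 * m * (2 : ℝ) ^ (-(k - m) / 8 + 1 / 4))
    (d : ℕ)
    (hd : d = ⌈(7 + k - m + Real.logb 2 n) ^ 2 * Real.logb 2 (4 * m) / Real.log 2⌉₊) :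
    ∃ Ext : (Fin n → Bool) → (Fin d → Bool) → (Fin ⌊m⌋₊ → Bool),
      ∀ P : (Fin n → Bool) → ℝ,
        (∀ x, 0 ≤ P x) → (∑ x, P x = 1) →
        (∀ x, P x ≤ (2 : ℝ) ^ (-k)) →
        (1 / 2) * ∑ z : Fin ⌊m⌋₊ → Bool, ∑ y : Fin d → Bool,
            |(1 / (2 : ℝ) ^ d) *
                ∑ x ∈ Finset.univ.filter (fun x : Fin n → Bool => Ext x y = z), P x
              - (1 / (2 : ℝ) ^ d) * (1 / (2 : ℝ) ^ (⌊m⌋₊))|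
          ≤ εT := by
  classical
  have hεpos : 0 < εT := by
    rw [hεT]
    have := Real.rpow_pos_of_pos (show (0:ℝ) < 2 by norm_num) (-(k - m) / 8 + 1 / 4)
    positivity
  -- trivial case : no output bits
  by_cases hM0 : ⌊m⌋₊ = 0
  · refine ⟨fun _ _ _ => false, ?_⟩
    intro P hP0 hPsum hPk
    have hsub : ∀ z1 z2 : Fin ⌊m⌋₊ → Bool, z1 = z2 := by
      intro z1 z2; funext i; exact absurd i.isLt (by omega)
    have hzero : ∀ z : Fin ⌊m⌋₊ → Bool, ∀ y : Fin d → Bool,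
        |(1 / (2 : ℝ) ^ d) *
            ∑ x ∈ Finset.univ.filter
              (fun x : Fin n → Bool => (fun _ _ _ => false) x y = z), P x
          - (1 / (2 : ℝ) ^ d) * (1 / (2 : ℝ) ^ (⌊m⌋₊))| = 0 := by
      intro z y
      have h1 : (Finset.univ.filter
          (fun x : Fin n → Bool => (fun _ _ _ => false) x y = z)) = Finset.univ := by
        apply Finset.filter_true_of_mem
        intro x _; exact hsub _ _
      rw [h1, hPsum, hM0]
      norm_num
    calc (1/2) * ∑ z : Fin ⌊m⌋₊ → Bool, ∑ y : Fin d → Bool,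
            |(1 / (2 : ℝ) ^ d) *
                ∑ x ∈ Finset.univ.filter
                  (fun x : Fin n → Bool => (fun _ _ _ => false) x y = z), P x
              - (1 / (2 : ℝ) ^ d) * (1 / (2 : ℝ) ^ (⌊m⌋₊))|
        = (1/2) * ∑ z : Fin ⌊m⌋₊ → Bool, ∑ y : Fin d → Bool, (0:ℝ) := by
          congr 1
          apply Finset.sum_congr rfl; intro z _
          apply Finset.sum_congr rfl; intro y _
          exact hzero z y
      _ = 0 := by simp
      _ ≤ εT := le_of_lt hεpos
  -- trivial case : εT ≥ 1
  by_cases hε1 : 1 ≤ εT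
  · refine ⟨fun _ _ _ => false, ?_⟩
    intro P hP0 hPsum hPk
    have hd0 : (0:ℝ) < (2:ℝ)^d := by positivity
    have hM0' : (0:ℝ) < (2:ℝ)^(⌊m⌋₊) := by positivity
    set U : ℝ := (1 / (2 : ℝ) ^ d) * (1 / (2 : ℝ) ^ (⌊m⌋₊)) with hU
    have hU0 : 0 ≤ U := by rw [hU]; positivity
    have habs : ∀ z : Fin ⌊m⌋₊ → Bool, ∀ y : Fin d → Bool,
        |(1 / (2 : ℝ) ^ d) *
            ∑ x ∈ Finset.univ.filter
              (fun x : Fin n → Bool => (fun _ _ _ => false) x y = z), P x - U|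
          ≤ (1 / (2 : ℝ) ^ d) *
            ∑ x ∈ Finset.univ.filter
              (fun x : Fin n → Bool => (fun _ _ _ => false) x y = z), P x + U := by
      intro z y
      have hq0 : 0 ≤ (1 / (2 : ℝ) ^ d) *
          ∑ x ∈ Finset.univ.filter
            (fun x : Fin n → Bool => (fun _ _ _ => false) x y = z), P x := by
        apply mul_nonneg (by positivity)
        exact Finset.sum_nonneg (fun x _ => hP0 x)
      rw [abs_le]
      constructor <;> linarith
    have hQsum : ∀ y : Fin d → Bool,
        ∑ z : Fin ⌊m⌋₊ → Bool, ∑ x ∈ Finset.univ.filter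
            (fun x : Fin n → Bool => (fun _ _ _ => false) x y = z), P x = 1 := by
      intro y
      rw [Finset.sum_fiberwise Finset.univ
        (fun x : Fin n → Bool => (fun _ _ _ => false) x y) P]
      exact hPsum
    have hcard : ∀ {j : ℕ}, (Fintype.card (Fin j → Bool) : ℝ) = (2:ℝ)^j := by
      intro j; simp
    calc (1/2) * ∑ z : Fin ⌊m⌋₊ → Bool, ∑ y : Fin d → Bool,
            |(1 / (2 : ℝ) ^ d) *
                ∑ x ∈ Finset.univ.filter
                  (fun x : Fin n → Bool => (fun _ _ _ => false) x y = z), P x - U|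
        ≤ (1/2) * ∑ z : Fin ⌊m⌋₊ → Bool, ∑ y : Fin d → Bool,
            ((1 / (2 : ℝ) ^ d) *
                ∑ x ∈ Finset.univ.filter
                  (fun x : Fin n → Bool => (fun _ _ _ => false) x y = z), P x + U) := by
          apply mul_le_mul_of_nonneg_left _ (by norm_num : (0:ℝ) ≤ 1/2)
          apply Finset.sum_le_sum; intro z _
          apply Finset.sum_le_sum; intro y _
          exact habs z y
      _ = (1/2) * ((∑ y : Fin d → Bool, ∑ z : Fin ⌊m⌋₊ → Bool,
            (1 / (2 : ℝ) ^ d) *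
                ∑ x ∈ Finset.univ.filter
                  (fun x : Fin n → Bool => (fun _ _ _ => false) x y = z), P x)
          + (2:ℝ)^(⌊m⌋₊) * ((2:ℝ)^d * U)) := by
          rw [Finset.sum_congr rfl (fun z _ => Finset.sum_add_distrib)]
          rw [Finset.sum_add_distrib, Finset.sum_comm]
          congr 1
          simp only [Finset.sum_const, Finset.card_univ, nsmul_eq_mul, hcard]
          try ring
      _ = 1 := by
          have h1 : ∀ y : Fin d → Bool, ∑ z : Fin ⌊m⌋₊ → Bool,
              (1 / (2 : ℝ) ^ d) *
                ∑ x ∈ Finset.univ.filter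
                  (fun x : Fin n → Bool => (fun _ _ _ => false) x y = z), P x
              = (1 / (2 : ℝ) ^ d) := by
            intro y
            rw [← Finset.mul_sum, hQsum y, mul_one]
          rw [Finset.sum_congr rfl (fun y _ => h1 y), Finset.sum_const,
            Finset.card_univ, nsmul_eq_mul, hcard, hU]
          field_simp
          ring
      _ ≤ εT := hε1
  -- ==================== MAIN CASE ====================
  push_neg at hε1
  set M := ⌊m⌋₊ with hMdef
  have hm1 : (1:ℝ) ≤ m := Nat.floor_pos.mp (Nat.pos_of_ne_zero hM0)
  have hMm : (M:ℝ) ≤ m := Nat.floor_le (le_of_lt hm)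
  clear_value M
  have h2xpos : (0:ℝ) < (2:ℝ) ^ (-(k - m) / 8 + 1 / 4) :=
    Real.rpow_pos_of_pos (by norm_num) _
  have ht10 : 10 < k - m := by
    have h1 : 3 * m * (2:ℝ) ^ (-(k - m) / 8 + 1 / 4) < 1 := by rw [← hεT]; exact hε1
    have h2 : 3 * (2:ℝ) ^ (-(k - m) / 8 + 1 / 4)
        ≤ 3 * m * (2:ℝ) ^ (-(k - m) / 8 + 1 / 4) := by nlinarith [h2xpos, hm1]
    have h3 : (2:ℝ) ^ (-(k - m) / 8 + 1 / 4) < (2:ℝ) ^ (-1 : ℝ) := by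
      have hhalf : (2:ℝ) ^ (-1 : ℝ) = 1/2 := by
        rw [Real.rpow_neg_one]; norm_num
      rw [hhalf]; linarith
    have h4 := (Real.rpow_lt_rpow_left_iff (by norm_num : (1:ℝ) < 2)).mp h3
    linarith
  have hk11 : 11 < k := by linarith
  set K := ⌈(2:ℝ)^k⌉₊ with hKdef
  have h2kpos : (0:ℝ) < (2:ℝ)^k := Real.rpow_pos_of_pos (by norm_num) k
  have hKge : (2:ℝ)^k ≤ K := Nat.le_ceil _
  have hKlt : (K:ℝ) < (2:ℝ)^k + 1 := Nat.ceil_lt_add_one (le_of_lt h2kpos)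
  have hKpos : 0 < K := Nat.ceil_pos.mpr h2kpos
  clear_value K
  have hcX : Fintype.card (Fin n → Bool) = 2^n := by simp
  have hcY : Fintype.card (Fin d → Bool) = 2^d := by simp
  have hcZ : Fintype.card (Fin M → Bool) = 2^M := by simp
  have hKNX : K ≤ Fintype.card (Fin n → Bool) := by
    rw [hcX, hKdef]
    apply Nat.ceil_le.mpr
    have h1 : ((2:ℝ))^k ≤ (2:ℝ)^(n:ℝ) :=
      Real.rpow_le_rpow_of_exponent_le (by norm_num) hkn
    rw [Real.rpow_natCast] at h1
    exact_mod_cast h1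
  set c := (2:ℝ)^(-k) with hcdef
  have hc0 : 0 < c := Real.rpow_pos_of_pos (by norm_num) _
  have hc2k : c * (2:ℝ)^k = 1 := by
    rw [hcdef, ← Real.rpow_add (by norm_num : (0:ℝ) < 2)]
    norm_num
  clear_value c
  have hcK1 : 1 ≤ c * K := by nlinarith [hKge, hc0]
  have hcKle : c * K ≤ 1 + c := by nlinarith [hKlt, hc0]
  set e := εT - 2*c with hedef
  clear_value e
  have h4c : 4 * c ≤ εT := by
    have h1 : (2:ℝ)^(2 - k) ≤ (2:ℝ) ^ (-(k - m) / 8 + 1 / 4) := by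
      apply Real.rpow_le_rpow_of_exponent_le (by norm_num)
      linarith
    have h22 : (2:ℝ)^(2:ℝ) = 4 := by
      rw [show ((2:ℝ):ℝ) = ((2:ℕ):ℝ) by norm_num, Real.rpow_natCast]
      norm_num
    have h2 : (2:ℝ)^(2 - k) = 4 * c := by
      rw [hcdef, show (2:ℝ) - k = 2 + (-k) by ring,
        Real.rpow_add (by norm_num : (0:ℝ) < 2), h22]
    have h3 : 3 * (2:ℝ) ^ (-(k - m) / 8 + 1 / 4) ≤ εT := by
      rw [hεT]; nlinarith [h2xpos, hm1]
    nlinarith [h2xpos]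
  have he0 : 0 < e := by rw [hedef]; linarith
  have heε2 : εT/2 ≤ e := by rw [hedef]; linarith
  have he1 : e ≤ 1 := by rw [hedef]; linarith [hc0]
  -- e^2 lower bound
  have hmt4pos : (0:ℝ) < (2:ℝ)^(-((k-m)/4)) := Real.rpow_pos_of_pos (by norm_num) _
  have he2 : 2 * (2:ℝ)^(-((k-m)/4)) ≤ e^2 := by
    have hx2 : (2:ℝ) ^ (-(k - m) / 8 + 1 / 4) * (2:ℝ) ^ (-(k - m) / 8 + 1 / 4)
        = (2:ℝ)^(-((k-m)/4)) * (2:ℝ)^(1/2 : ℝ) := by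
      rw [← Real.rpow_add (by norm_num : (0:ℝ) < 2),
        ← Real.rpow_add (by norm_num : (0:ℝ) < 2)]
      congr 1
      ring
    have hsqrt2 : (1:ℝ) ≤ (2:ℝ)^(1/2:ℝ) := Real.one_le_rpow (by norm_num) (by norm_num)
    have hXX : (2:ℝ)^(-((k-m)/4))
        ≤ (2:ℝ) ^ (-(k - m) / 8 + 1 / 4) * (2:ℝ) ^ (-(k - m) / 8 + 1 / 4) := by
      nlinarith [hx2, hsqrt2, hmt4pos]
    have hmm : (1:ℝ) ≤ m * m := by nlinarith [hm1]
    have hε2 : 9 * (2:ℝ)^(-((k-m)/4)) ≤ εT^2 := by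
      rw [hεT]
      nlinarith [hXX, hmm, h2xpos, hmt4pos, hm1,
        mul_le_mul_of_nonneg_right hmm
          (le_of_lt (mul_pos h2xpos h2xpos))]
    nlinarith [heε2, hεpos, hε2, sq_nonneg (e - εT/2)]
  -- seed length lower bound
  have hn0 : (0:ℝ) < n := by exact_mod_cast hn
  have hL0 : 0 ≤ Real.logb 2 n := Real.logb_nonneg (by norm_num) (by exact_mod_cast hn)
  have h2L : (2:ℝ) ^ (Real.logb 2 (n:ℝ)) = (n:ℝ) :=
    Real.rpow_logb (by norm_num) (by norm_num) hn0
  have hlog2pos : 0 < Real.log 2 := Real.log_pos (by norm_num)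
  have hlog2le : Real.log 2 ≤ 1 := by
    linarith [Real.log_le_sub_one_of_pos (by norm_num : (0:ℝ) < 2)]
  have hlogb4m : 2 ≤ Real.logb 2 (4*m) := by
    have h22 : (4:ℝ) = (2:ℝ)^(2:ℝ) := by
      rw [show ((2:ℝ):ℝ) = ((2:ℕ):ℝ) by norm_num, Real.rpow_natCast]
      norm_num
    have h4 : Real.logb 2 4 = 2 := by
      rw [h22, Real.logb_rpow (by norm_num) (by norm_num)]
    calc (2:ℝ) = Real.logb 2 4 := h4.symm
      _ ≤ Real.logb 2 (4*m) :=
          Real.logb_le_logb_of_le (by norm_num) (by norm_num) (by linarith)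
  have hdge : (k-m)/4 + Real.logb 2 n + 3 ≤ (d:ℝ) := by
    have hr : ((7 + k - m + Real.logb 2 n) ^ 2 * Real.logb 2 (4 * m) / Real.log 2 : ℝ)
        ≤ (d:ℝ) := by
      rw [hd]; exact Nat.le_ceil _
    have hA15 : 15 ≤ 7 + k - m + Real.logb 2 n := by linarith
    have hsq : (0:ℝ) ≤ (7 + k - m + Real.logb 2 n)^2 := sq_nonneg _
    have h1 : 2 * (7 + k - m + Real.logb 2 n)^2
        ≤ (7 + k - m + Real.logb 2 n)^2 * Real.logb 2 (4*m) := by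
      have hp := mul_nonneg (sub_nonneg.mpr hlogb4m) hsq
      nlinarith [hp]
    have h2 : (7 + k - m + Real.logb 2 n)^2 * Real.logb 2 (4*m)
        ≤ (7 + k - m + Real.logb 2 n)^2 * Real.logb 2 (4*m) / Real.log 2 := by
      rw [le_div_iff₀ hlog2pos]
      exact mul_le_of_le_one_right (mul_nonneg hsq (by linarith)) hlog2le
    have h3 : (k-m)/4 + Real.logb 2 n + 3 ≤ 2 * (7 + k - m + Real.logb 2 n)^2 := by
      nlinarith [hL0, ht10, sq_nonneg (7 + k - m + Real.logb 2 n - 15)]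
    linarith
  have h2d : 8 * (n:ℝ) * (2:ℝ)^((k-m)/4) ≤ (2:ℝ)^(d:ℕ) := by
    rw [← Real.rpow_natCast 2 d]
    have h1 : (2:ℝ)^((k-m)/4 + Real.logb 2 n + 3) ≤ (2:ℝ)^((d:ℕ):ℝ) :=
      Real.rpow_le_rpow_of_exponent_le (by norm_num) hdge
    have h8 : (2:ℝ)^(3:ℝ) = 8 := by
      rw [show ((3:ℝ):ℝ) = ((3:ℕ):ℝ) by norm_num, Real.rpow_natCast]
      norm_num
    have h2 : (2:ℝ)^((k-m)/4 + Real.logb 2 n + 3)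
        = 8 * (n:ℝ) * (2:ℝ)^((k-m)/4) := by
      rw [Real.rpow_add (by norm_num : (0:ℝ) < 2),
        Real.rpow_add (by norm_num : (0:ℝ) < 2), h2L, h8]
      ring
    linarith [h2.symm.le.trans h1]
  have h2Mle : ((2:ℝ)^(M:ℕ)) ≤ (2:ℝ)^(k - (k-m)/4 - 3) := by
    rw [← Real.rpow_natCast 2 M]
    apply Real.rpow_le_rpow_of_exponent_le (by norm_num)
    linarith [hMm]
  -- the key numeric condition
  have hcond : ((Fintype.card (Fin n → Bool) : ℝ) ^ K) *
      (2:ℝ) ^ (Fintype.card (Fin M → Bool) * Fintype.card (Fin d → Bool)) *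
      Real.exp (-(e^2 * K * (Fintype.card (Fin d → Bool))) / 4) < 1 := by
    rw [hcX, hcY, hcZ]
    have hNYr0 : (0:ℝ) < (2:ℝ)^(d:ℕ) := by positivity
    have hKr0 : (0:ℝ) < K := by exact_mod_cast hKpos
    have htt : (2:ℝ)^(-((k-m)/4)) * (2:ℝ)^((k-m)/4) = 1 := by
      rw [← Real.rpow_add (by norm_num : (0:ℝ) < 2)]
      norm_num
    have ht4pos : (0:ℝ) < (2:ℝ)^((k-m)/4) := Real.rpow_pos_of_pos (by norm_num) _
    -- (I)
    have hI : ((2^n : ℕ) : ℝ)^K ≤ Real.exp (e^2 * K * ((2:ℝ)^(d:ℕ)) / 16) := by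
      have h1 : ((2^n : ℕ) : ℝ)^K = (2:ℝ)^(n*K : ℕ) := by
        push_cast
        rw [pow_mul]
      have h2 : (2:ℝ)^(n*K : ℕ) = Real.exp (Real.log 2 * ((n*K : ℕ) : ℝ)) := by
        rw [← Real.rpow_natCast 2 (n*K), Real.rpow_def_of_pos (by norm_num : (0:ℝ) < 2)]
      have h4 : (2 * (2:ℝ)^(-((k-m)/4))) * (8 * (n:ℝ) * (2:ℝ)^((k-m)/4))
          ≤ e^2 * ((2:ℝ)^(d:ℕ)) :=
        mul_le_mul he2 h2d (by positivity) (sq_nonneg e)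
      have h5 : (2 * (2:ℝ)^(-((k-m)/4))) * (8 * (n:ℝ) * (2:ℝ)^((k-m)/4))
          = 16 * n := by
        have h5a : (2 * (2:ℝ)^(-((k-m)/4))) * (8 * (n:ℝ) * (2:ℝ)^((k-m)/4))
            = 16 * n * ((2:ℝ)^(-((k-m)/4)) * (2:ℝ)^((k-m)/4)) := by ring
        rw [h5a, htt, mul_one]
      rw [h5] at h4
      have h3 : (n:ℝ) * Real.log 2 ≤ e^2 * ((2:ℝ)^(d:ℕ)) / 16 := by
        have h3a : (n:ℝ) * Real.log 2 ≤ (n:ℝ) :=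
          mul_le_of_le_one_right (le_of_lt hn0) hlog2le
        calc (n:ℝ) * Real.log 2 ≤ (n:ℝ) := h3a
          _ = (16 * (n:ℝ)) / 16 := by ring
          _ ≤ e^2 * ((2:ℝ)^(d:ℕ)) / 16 := by
              apply div_le_div_of_nonneg_right h4 (by norm_num)
      rw [h1, h2]
      apply Real.exp_le_exp.mpr
      have h6 : (K:ℝ) * ((n:ℝ) * Real.log 2) ≤ (K:ℝ) * (e^2 * ((2:ℝ)^(d:ℕ)) / 16) :=
        mul_le_mul_of_nonneg_left h3 (le_of_lt hKr0)
      calc Real.log 2 * ((n*K : ℕ) : ℝ) = (K:ℝ) * ((n:ℝ) * Real.log 2) := by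
            push_cast; ring
        _ ≤ (K:ℝ) * (e^2 * ((2:ℝ)^(d:ℕ)) / 16) := h6
        _ = e^2 * K * ((2:ℝ)^(d:ℕ)) / 16 := by ring
    -- (II)
    have hII : (2:ℝ) ^ (2^M * 2^d : ℕ)
        ≤ Real.exp (e^2 * K * ((2:ℝ)^(d:ℕ)) / 16) := by
      have h1 : (2:ℝ)^(2^M * 2^d : ℕ)
          = Real.exp (Real.log 2 * (((2:ℝ)^(M:ℕ)) * ((2:ℝ)^(d:ℕ)))) := by
        rw [← Real.rpow_natCast 2 (2^M * 2^d),
          Real.rpow_def_of_pos (by norm_num : (0:ℝ) < 2)]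
        congr 2
        push_cast
        ring
      have h3 : (2 * (2:ℝ)^(-((k-m)/4))) * (2:ℝ)^k ≤ e^2 * K :=
        mul_le_mul he2 hKge (le_of_lt h2kpos) (sq_nonneg e)
      have h4 : (2 * (2:ℝ)^(-((k-m)/4))) * (2:ℝ)^k
          = 16 * (2:ℝ)^(k - (k-m)/4 - 3) := by
        rw [show k - (k-m)/4 - 3 = -((k-m)/4) + k + (-3) by ring,
          Real.rpow_add (by norm_num : (0:ℝ) < 2),
          Real.rpow_add (by norm_num : (0:ℝ) < 2)]
        have h8 : (2:ℝ)^(-3:ℝ) = 1/8 := by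
          rw [show (-3:ℝ) = -((3:ℕ):ℝ) by norm_num, Real.rpow_neg (by norm_num),
            Real.rpow_natCast]
          norm_num
        rw [h8]; ring
      rw [h4] at h3
      have hNZr0 : (0:ℝ) < (2:ℝ)^(M:ℕ) := by positivity
      have h2 : Real.log 2 * ((2:ℝ)^(M:ℕ)) ≤ e^2 * K / 16 := by
        have h2a : Real.log 2 * ((2:ℝ)^(M:ℕ)) ≤ ((2:ℝ)^(M:ℕ)) :=
          mul_le_of_le_one_left (le_of_lt hNZr0) hlog2le
        linarith [h2Mle]
      rw [h1]
      apply Real.exp_le_exp.mpr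
      have h6 : (Real.log 2 * ((2:ℝ)^(M:ℕ))) * ((2:ℝ)^(d:ℕ))
          ≤ (e^2 * K / 16) * ((2:ℝ)^(d:ℕ)) :=
        mul_le_mul_of_nonneg_right h2 (le_of_lt hNYr0)
      calc Real.log 2 * (((2:ℝ)^(M:ℕ)) * ((2:ℝ)^(d:ℕ)))
          = (Real.log 2 * ((2:ℝ)^(M:ℕ))) * ((2:ℝ)^(d:ℕ)) := by ring
        _ ≤ (e^2 * K / 16) * ((2:ℝ)^(d:ℕ)) := h6
        _ = e^2 * K * ((2:ℝ)^(d:ℕ)) / 16 := by ring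
    -- combine
    calc ((2^n : ℕ) : ℝ)^K * (2:ℝ) ^ (2^M * 2^d : ℕ)
          * Real.exp (-(e^2 * K * ((2^d : ℕ):ℝ)) / 4)
        ≤ Real.exp (e^2 * K * ((2:ℝ)^(d:ℕ)) / 16)
          * Real.exp (e^2 * K * ((2:ℝ)^(d:ℕ)) / 16)
          * Real.exp (-(e^2 * K * ((2:ℝ)^(d:ℕ))) / 4) := by
          have hc1 : ((2^d : ℕ):ℝ) = (2:ℝ)^(d:ℕ) := by push_cast; ring
          rw [hc1]
          apply mul_le_mul _ le_rfl (le_of_lt (Real.exp_pos _)) (by positivity)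
          apply mul_le_mul hI hII (by positivity) (le_of_lt (Real.exp_pos _))
      _ = Real.exp (e^2 * K * ((2:ℝ)^(d:ℕ)) / 16 + e^2 * K * ((2:ℝ)^(d:ℕ)) / 16
            + (-(e^2 * K * ((2:ℝ)^(d:ℕ))) / 4)) := by
          rw [← Real.exp_add, ← Real.exp_add]
      _ < 1 := by
          apply Real.exp_lt_one_iff.mpr
          have hKr0 : (0:ℝ) < K := by exact_mod_cast hKpos
          have hNYr0 : (0:ℝ) < (2:ℝ)^(d:ℕ) := by positivity
          have hpos : 0 < e^2 * K * ((2:ℝ)^(d:ℕ)) :=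
            mul_pos (mul_pos (pow_pos he0 2) hKr0) hNYr0
          linarith
  -- obtain the good extractor
  obtain ⟨F, hF⟩ := exists_good_ext (X := Fin n → Bool) (Y := Fin d → Bool)
    (Z := Fin M → Bool) K e he0 he1 hcond
  refine ⟨fun x y => F (x, y), ?_⟩
  intro P hP0 hPsum hPk
  have hd0 : (0:ℝ) < (2:ℝ)^d := by positivity
  have hMp0 : (0:ℝ) < (2:ℝ)^M := by positivity
  set U : ℝ := (1 / (2:ℝ)^d) * (1 / (2:ℝ)^M) with hUdef
  clear_value U
  set Q := (fun p : (Fin M → Bool) × (Fin d → Bool) =>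
    (1 / (2:ℝ)^d) *
      ∑ x ∈ Finset.univ.filter (fun x : Fin n → Bool => F (x, p.2) = p.1), P x)
    with hQdef
  clear_value Q
  show (1/2) * ∑ z : Fin M → Bool, ∑ y : Fin d → Bool,
      |(1 / (2:ℝ)^d) *
          ∑ x ∈ Finset.univ.filter (fun x : Fin n → Bool => F (x, y) = z), P x
        - U| ≤ εT
  -- total mass of Q
  have hcardY : ((Fintype.card (Fin d → Bool)):ℝ) = (2:ℝ)^d := by simp
  have hcardZY : ((Fintype.card ((Fin M → Bool) × (Fin d → Bool))):ℝ)
      = (2:ℝ)^M * (2:ℝ)^d := by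
    simp [Fintype.card_prod]
  have hQtot : ∑ p : (Fin M → Bool) × (Fin d → Bool), Q p = 1 := by
    simp only [hQdef]
    rw [Fintype.sum_prod_type, Finset.sum_comm]
    have h1 : ∀ y : Fin d → Bool,
        ∑ z : Fin M → Bool, (1/(2:ℝ)^d) *
          ∑ x ∈ Finset.univ.filter (fun x : Fin n → Bool => F (x, y) = z), P x
        = (1/(2:ℝ)^d) := by
      intro y
      rw [← Finset.mul_sum,
        Finset.sum_fiberwise Finset.univ (fun x : Fin n → Bool => F (x, y)) P,
        hPsum, mul_one]
    rw [Finset.sum_congr rfl (fun y _ => h1 y), Finset.sum_const, Finset.card_univ,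
      nsmul_eq_mul, hcardY]
    field_simp
  have hUtot : ∑ _p : (Fin M → Bool) × (Fin d → Bool), U = 1 := by
    rw [Finset.sum_const, Finset.card_univ, nsmul_eq_mul, hcardZY, hUdef]
    field_simp
  have hsums : ∑ p : (Fin M → Bool) × (Fin d → Bool), Q p
      = ∑ p : (Fin M → Bool) × (Fin d → Bool), (fun _ => U) p := by
    rw [hQtot]
    simpa using hUtot.symm
  have hsd := half_abs_sum_eq Q (fun _ => U) hsums
  have hform : (1/2) * ∑ z : Fin M → Bool, ∑ y : Fin d → Bool,
      |(1 / (2:ℝ)^d) *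
          ∑ x ∈ Finset.univ.filter (fun x : Fin n → Bool => F (x, y) = z), P x
        - U|
      = (1/2) * ∑ p : (Fin M → Bool) × (Fin d → Bool), |Q p - U| := by
    simp only [hQdef, Fintype.sum_prod_type]
  rw [hform, hsd]
  obtain ⟨Tstar, hTdef⟩ : ∃ T : Finset ((Fin M → Bool) × (Fin d → Bool)),
      T = Finset.univ.filter (fun p => U < Q p) := ⟨_, rfl⟩
  rw [← hTdef]
  -- rewrite the Q-mass of Tstar through counting
  have hQT : ∑ p ∈ Tstar, Q p
      = (1/(2:ℝ)^d) * ∑ x : Fin n → Bool, P x *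
          ((Finset.univ.filter (fun y => (F (x, y), y) ∈ Tstar)).card : ℝ) := by
    simp only [hQdef]
    rw [← Finset.mul_sum]
    congr 1
    calc ∑ p ∈ Tstar, ∑ x ∈ Finset.univ.filter
            (fun x : Fin n → Bool => F (x, p.2) = p.1), P x
        = ∑ p ∈ Tstar, ∑ x : Fin n → Bool,
            (if F (x, p.2) = p.1 then P x else 0) := by
          apply Finset.sum_congr rfl; intro p _
          rw [Finset.sum_filter]
      _ = ∑ x : Fin n → Bool, ∑ p ∈ Tstar,
            (if F (x, p.2) = p.1 then P x else 0) := Finset.sum_comm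
      _ = ∑ x : Fin n → Bool, P x *
            ((Finset.univ.filter (fun y => (F (x, y), y) ∈ Tstar)).card : ℝ) := by
          apply Finset.sum_congr rfl; intro x _
          rw [← Finset.sum_filter, Finset.sum_const, nsmul_eq_mul]
          have hbij : (Tstar.filter (fun p => F (x, p.2) = p.1)).card
              = (Finset.univ.filter (fun y => (F (x, y), y) ∈ Tstar)).card := by
            refine Finset.card_bij' (fun p _ => p.2) (fun y _ => (F (x, y), y))
              ?_ ?_ ?_ ?_
            · intro p hp
              simp only [Finset.mem_filter] at hp ⊢
              refine ⟨Finset.mem_univ _, ?_⟩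
              have hpe : (F (x, p.2), p.2) = p := by
                rw [Prod.ext_iff]; exact ⟨hp.2, rfl⟩
              rw [hpe]; exact hp.1
            · intro y hy
              simp only [Finset.mem_filter] at hy ⊢
              exact ⟨hy.2, trivial⟩
            · intro p hp
              simp only [Finset.mem_filter] at hp
              rw [Prod.ext_iff]
              exact ⟨hp.2, rfl⟩
            · intro y hy; rfl
          rw [hbij]; ring
  -- top-K set for the counting function
  obtain ⟨S₀, hS₀card, hS₀top⟩ := exists_topK
    (fun x : Fin n → Bool =>
      ((Finset.univ.filter (fun y => (F (x, y), y) ∈ Tstar)).card : ℝ)) K hKNX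
  have hwt : ∑ x : Fin n → Bool, P x *
        ((Finset.univ.filter (fun y => (F (x, y), y) ∈ Tstar)).card : ℝ)
      ≤ c * ∑ x ∈ S₀,
        ((Finset.univ.filter (fun y => (F (x, y), y) ∈ Tstar)).card : ℝ) := by
    apply weighted_le_top P _ c S₀ hP0 _ hPsum _ hS₀top _
    · intro x; exact hPk x
    · intro x; positivity
    · rw [hS₀card]; exact hcK1
  have hS2 := hF Tstar S₀ hS₀card
  rw [hcY, hcZ] at hS2
  push_cast at hS2
  -- assemble the final chain
  have hchain : (1/(2:ℝ)^d) * (∑ x : Fin n → Bool, P x *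
        ((Finset.univ.filter (fun y => (F (x, y), y) ∈ Tstar)).card : ℝ))
      ≤ (1/(2:ℝ)^d) * (c * ((K:ℝ) * (Tstar.card : ℝ) / (2:ℝ)^M
          + e * (K:ℝ) * (2:ℝ)^d)) := by
    apply mul_le_mul_of_nonneg_left _ (by positivity)
    calc ∑ x : Fin n → Bool, P x *
          ((Finset.univ.filter (fun y => (F (x, y), y) ∈ Tstar)).card : ℝ)
        ≤ c * ∑ x ∈ S₀,
          ((Finset.univ.filter (fun y => (F (x, y), y) ∈ Tstar)).card : ℝ) := hwt
      _ ≤ c * ((K:ℝ) * (Tstar.card : ℝ) / (2:ℝ)^M + e * (K:ℝ) * (2:ℝ)^d) :=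
          mul_le_mul_of_nonneg_left hS2 (le_of_lt hc0)
  have halg : (1/(2:ℝ)^d) * (c * ((K:ℝ) * (Tstar.card : ℝ) / (2:ℝ)^M
        + e * (K:ℝ) * (2:ℝ)^d)) - (Tstar.card : ℝ) * U
      = (c*(K:ℝ) - 1) * ((Tstar.card : ℝ) / ((2:ℝ)^d * (2:ℝ)^M)) + c*(K:ℝ)*e := by
    rw [hUdef]
    field_simp
    ring
  have hR0 : 0 ≤ (Tstar.card : ℝ) / ((2:ℝ)^d * (2:ℝ)^M) := by positivity
  have hR1 : (Tstar.card : ℝ) / ((2:ℝ)^d * (2:ℝ)^M) ≤ 1 := by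
    rw [div_le_one (by positivity)]
    have h1 : Tstar.card ≤ Fintype.card ((Fin M → Bool) × (Fin d → Bool)) := by
      rw [← Finset.card_univ]
      exact Finset.card_le_card (Finset.subset_univ _)
    calc (Tstar.card : ℝ)
        ≤ ((Fintype.card ((Fin M → Bool) × (Fin d → Bool)) : ℕ) : ℝ) := by
          exact_mod_cast h1
      _ = (2:ℝ)^M * (2:ℝ)^d := hcardZY
      _ = (2:ℝ)^d * (2:ℝ)^M := by ring
  have p1 : (c*(K:ℝ) - 1) * ((Tstar.card : ℝ) / ((2:ℝ)^d * (2:ℝ)^M))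
      ≤ (c*(K:ℝ) - 1) :=
    mul_le_of_le_one_right (by linarith [hcK1]) hR1
  have p2 : c*(K:ℝ)*e ≤ (1+c)*e :=
    mul_le_mul_of_nonneg_right hcKle (le_of_lt he0)
  have p3 : c*e ≤ c := mul_le_of_le_one_right (le_of_lt hc0) he1
  rw [Finset.sum_sub_distrib, hQT, Finset.sum_const, nsmul_eq_mul]
  linarith [hchain, halg, p1, p2, p3, hcKle, hcK1, hc0, hedef]
end
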